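/- Let T₀ be a rooted tree with root v₀ and let v_j ≠ v₀ be a vertex on a longest path starting at v₀. If T₀' is obtained from T₀ by adding a new pendant vertex w adjacent to v_j, then ν(T₀') < ν(T₀). -/

import Mathlib

open Matrix BigOperators
open scoped Classical

/-- Weighted Laplacian of a weight function. -/
noncomputable def wLap {V : Type*} [Fintype V] [DecidableEq V] (w : V → V → ℝ) : Matrix V V ℝ :=
  Matrix.diagonal (fun v => ∑ u, w v u) - Matrix.of w

/-- The `k`-th smallest eigenvalue of a real matrix (0 if not Hermitian / out of range). -/
noncomputable def kthEig {W : Type*} [Fintype W] [DecidableEq W] (A : Matrix W W ℝ) (k : ℕ) : ℝ :=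
  if hA : A.IsHermitian then
    if h : k < Fintype.card W then
      (let g : Fin (Fintype.card W) → ℝ := hA.eigenvalues ∘ (Fintype.equivFin W).symm
       (g ∘ Tuple.sort g) ⟨k, h⟩)
    else 0
  else 0

noncomputable def minEig {W : Type*} [Fintype W] [DecidableEq W] (A : Matrix W W ℝ) : ℝ := kthEig A 0

/-- algebraic connectivity of a simple graph -/
noncomputable def algConn {V : Type*} [Fintype V] [DecidableEq V] (G : SimpleGraph V) : ℝ :=
  kthEig (G.lapMatrix ℝ) 1

/-- Dirichlet matrix: weighted Laplacian restricted to an interior set `S`. -/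
noncomputable def dirichletMatrix {V : Type*} [Fintype V] [DecidableEq V]
    (w : V → V → ℝ) (S : Set V) : Matrix S S ℝ :=
  (wLap w).submatrix Subtype.val Subtype.val

noncomputable def degSeq {V : Type*} [Fintype V] [DecidableEq V] (G : SimpleGraph V) : Multiset ℕ :=
  Finset.univ.val.map (fun v => G.degree v)

/-- Edge weights of a rooted tree: every edge has weight 1 except the
boundary edge from the root `v₀` to the distinguished neighbor `x`,
which has weight `w₀`. -/
noncomputable def treeWeight {V : Type*} [Fintype V] [DecidableEq V]
    (T : SimpleGraph V) (v₀ x : V) (w₀ : ℝ) : V → V → ℝ :=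
  fun u v => if T.Adj u v then
    (if (u = v₀ ∧ v = x) ∨ (u = x ∧ v = v₀) then w₀ else 1) else 0

/-- First Dirichlet eigenvalue of a rooted tree (root = unique boundary vertex). -/
noncomputable def nuRooted {V : Type*} [Fintype V] [DecidableEq V]
    (T : SimpleGraph V) (v₀ x : V) (w₀ : ℝ) : ℝ :=
  minEig (dirichletMatrix (treeWeight T v₀ x w₀) ({v₀}ᶜ : Set V))

/-- A caterpillar: the non-pendant vertices can be arranged as a path. -/
noncomputable def IsCaterpillar {V : Type*} [Fintype V] [DecidableEq V]
    (T : SimpleGraph V) : Prop :=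
  ∃ P : List V, P.Nodup ∧ (∀ v, v ∈ P ↔ 1 < T.degree v) ∧ P.Chain' T.Adj

/-!
Extend a positive Dirichlet eigenvector `f` of `T₀` (eigenvalue `ν`) to the new pendant vertex `w`
by `f(w) = f(v_j)`. The Laplacian of the enlarged tree maps this vector `g` to `ν f` on the old
vertices and to `0` at `w`, so the Rayleigh quotient of `g` is `ν ‖f‖² / (‖f‖² + f(v_j)²)`, which
is `< ν` as soon as `ν > 0`. Positivity of `ν` holds because the Laplacian has zero column sums:
summing the eigenvalue equation over the interior gives `ν ∑ f = ∑ᵤ w(v₀, u) f(u) ≥ w₀ f(x) > 0`.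
-/

namespace Matrix

variable {W : Type*} [Fintype W] [DecidableEq W]

lemma minEig_le_eigenvalues {A : Matrix W W ℝ} (hA : A.IsHermitian) (i : W) :
    minEig A ≤ hA.eigenvalues i := by
  have hcard : 0 < Fintype.card W := Fintype.card_pos_iff.mpr ⟨i⟩
  rw [minEig, kthEig, dif_pos hA, dif_pos hcard]
  set g : Fin (Fintype.card W) → ℝ := hA.eigenvalues ∘ (Fintype.equivFin W).symm
  have hi : hA.eigenvalues i = (g ∘ Tuple.sort g) ((Tuple.sort g)⁻¹ (Fintype.equivFin W i)) := by
    simp [g]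
  rw [hi]
  exact Tuple.monotone_sort g (Fin.mk_le_of_le_val (Nat.zero_le _))

lemma IsHermitian.mul_dotProduct_self_le {A : Matrix W W ℝ} (hA : A.IsHermitian) {c : ℝ}
    (hc : ∀ i, c ≤ hA.eigenvalues i) (x : W → ℝ) :
    c * (x ⬝ᵥ x) ≤ x ⬝ᵥ (A *ᵥ x) := by
  set U : Matrix W W ℝ := (hA.eigenvectorUnitary : Matrix W W ℝ)
  have hU : U * star U = 1 := mem_unitaryGroup_iff.mp hA.eigenvectorUnitary.2
  set y : W → ℝ := star U *ᵥ x with hy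
  have hxU : x ᵥ* U = y := by
    rw [hy, star_eq_conjTranspose, conjTranspose_eq_transpose_of_trivial, mulVec_transpose]
  have hnorm : x ⬝ᵥ x = y ⬝ᵥ y := by
    nth_rewrite 2 [← one_mulVec x]
    rw [← hU, ← mulVec_mulVec, dotProduct_mulVec, hxU]
  have hAx : A *ᵥ x = U *ᵥ (diagonal (RCLike.ofReal ∘ hA.eigenvalues) *ᵥ y) := by
    conv_lhs => rw [hA.spectral_theorem, Unitary.conjStarAlgAut_apply]
    rw [← mulVec_mulVec, ← mulVec_mulVec]
  have hquad : x ⬝ᵥ (A *ᵥ x) = ∑ i, hA.eigenvalues i * (y i * y i) := by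
    rw [hAx, dotProduct_mulVec, hxU]
    simp only [dotProduct, mulVec_diagonal, Function.comp_apply, RCLike.ofReal_real_eq_id, id]
    exact Finset.sum_congr rfl fun i _ => by ring
  rw [hquad, hnorm, dotProduct, Finset.mul_sum]
  exact Finset.sum_le_sum fun i _ => mul_le_mul_of_nonneg_right (hc i) (mul_self_nonneg _)

lemma minEig_lt_of_dotProduct_mulVec_lt {A : Matrix W W ℝ} (hA : A.IsHermitian) {x : W → ℝ}
    {c : ℝ} (h : x ⬝ᵥ (A *ᵥ x) < c * (x ⬝ᵥ x)) : minEig A < c := by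
  have hle := hA.mul_dotProduct_self_le (minEig_le_eigenvalues hA) x
  have hxx : 0 ≤ x ⬝ᵥ x := Finset.sum_nonneg fun i _ => mul_self_nonneg (x i)
  by_contra! hcm
  nlinarith [mul_le_mul_of_nonneg_right hcm hxx]

end Matrix

section WeightedLaplacian

variable {V : Type*} [Fintype V]

lemma Fintype.sum_coe_sort_of_eq_zero {S : Set V} [Fintype S] (f : V → ℝ)
    (hf : ∀ v ∉ S, f v = 0) : ∑ a : S, f a = ∑ v, f v := by
  rw [Finset.sum_set_coe]
  exact Finset.sum_subset (Finset.subset_univ _) fun v _ hv => hf v (by simpa using hv)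

lemma dotProduct_comp_val_of_eq_zero {S : Set V} [Fintype S] {F : V → ℝ}
    (hF : ∀ v ∉ S, F v = 0) (H : V → ℝ) :
    (F ∘ Subtype.val : S → ℝ) ⬝ᵥ (H ∘ Subtype.val) = F ⬝ᵥ H :=
  Fintype.sum_coe_sort_of_eq_zero (fun v => F v * H v) fun v hv => by simp [hF v hv]

variable [DecidableEq V]

lemma wLap_mulVec_apply (w : V → V → ℝ) (F : V → ℝ) (v : V) :
    (wLap w *ᵥ F) v = ∑ u, w v u * (F v - F u) := by
  rw [wLap, sub_mulVec, Pi.sub_apply, mulVec_diagonal]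
  simp [mulVec, dotProduct, mul_sub, Finset.sum_mul]

lemma wLap_isHermitian {w : V → V → ℝ} (hw : ∀ u v, w u v = w v u) : (wLap w).IsHermitian := by
  ext u v
  by_cases h : u = v
  · simp [wLap, h]
  · simp [wLap, h, Ne.symm h, hw u v]

lemma dirichletMatrix_isHermitian {w : V → V → ℝ} (hw : ∀ u v, w u v = w v u) (S : Set V) :
    (dirichletMatrix w S).IsHermitian :=
  (wLap_isHermitian hw).submatrix _

lemma dirichletMatrix_mulVec_comp_val {S : Set V} [Fintype S] (w : V → V → ℝ) {F : V → ℝ}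
    (hF : ∀ v ∉ S, F v = 0) :
    dirichletMatrix w S *ᵥ (F ∘ Subtype.val) = (wLap w *ᵥ F) ∘ Subtype.val := by
  ext a
  exact Fintype.sum_coe_sort_of_eq_zero (fun v => wLap w a v * F v) fun v hv => by simp [hF v hv]

lemma wLap_mulVec_extend_apply {S : Set V} [Fintype S] {w : V → V → ℝ} {f : S → ℝ} {ν : ℝ}
    (hf : dirichletMatrix w S *ᵥ f = ν • f) {v : V} (hv : v ∈ S) :
    (wLap w *ᵥ Function.extend Subtype.val f 0) v = ν * Function.extend Subtype.val f 0 v := by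
  have hext : Function.extend Subtype.val f 0 ∘ Subtype.val = f :=
    funext (Subtype.val_injective.extend_apply f 0)
  have hoff : ∀ u ∉ S, Function.extend Subtype.val f 0 u = 0 := fun u hu =>
    Function.extend_apply' _ _ _ fun ⟨a, ha⟩ => hu (ha ▸ a.2)
  rw [← hext, dirichletMatrix_mulVec_comp_val _ hoff] at hf
  exact congrFun hf ⟨v, hv⟩

lemma sum_wLap_mulVec {w : V → V → ℝ} (hw : ∀ u v, w u v = w v u) (F : V → ℝ) :
    ∑ v, (wLap w *ᵥ F) v = 0 := by
  simp only [wLap_mulVec_apply, mul_sub, Finset.sum_sub_distrib]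
  rw [Finset.sum_comm]
  simp only [hw]
  ring

lemma eigenvalue_pos_of_nonneg_eigenvector {w : V → V → ℝ} (hw : ∀ u v, w u v = w v u)
    (hw_nonneg : ∀ u v, 0 ≤ w u v) {v₀ x : V} (hwx : 0 < w v₀ x) {F : V → ℝ}
    (hF : ∀ v, 0 ≤ F v) (hFx : 0 < F x) (hF₀ : F v₀ = 0) {ν : ℝ}
    (hLF : ∀ v ≠ v₀, (wLap w *ᵥ F) v = ν * F v) : 0 < ν := by
  have hflux : ν * ∑ v, F v = ∑ u, w v₀ u * F u := by
    have hsum : ∑ v, ((wLap w *ᵥ F) v - ν * F v) = (wLap w *ᵥ F) v₀ - ν * F v₀ :=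
      Finset.sum_eq_single v₀ (fun v _ hv => by rw [hLF v hv, sub_self])
        (fun h => absurd (Finset.mem_univ v₀) h)
    rw [Finset.sum_sub_distrib, sum_wLap_mulVec hw, ← Finset.mul_sum, wLap_mulVec_apply] at hsum
    simp only [hF₀, zero_sub, mul_neg, Finset.sum_neg_distrib, mul_zero, sub_zero] at hsum
    linarith
  have hflux_pos : 0 < ∑ u, w v₀ u * F u :=
    lt_of_lt_of_le (mul_pos hwx hFx)
      (Finset.single_le_sum (f := fun u => w v₀ u * F u)
        (fun u _ => mul_nonneg (hw_nonneg _ _) (hF u)) (Finset.mem_univ x))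
  have hmass : 0 ≤ ∑ v, F v := Finset.sum_nonneg fun v _ => hF v
  by_contra! hν
  nlinarith [mul_nonpos_of_nonpos_of_nonneg hν hmass]

def attachPendant (w : V → V → ℝ) (c : V) (a : ℝ) : Option V → Option V → ℝ
  | some u, some v => w u v
  | none, some v => if v = c then a else 0
  | some u, none => if u = c then a else 0
  | none, none => 0

omit [Fintype V] in
lemma attachPendant_symm {w : V → V → ℝ} (hw : ∀ u v, w u v = w v u) (c : V) (a : ℝ) :
    ∀ o o', attachPendant w c a o o' = attachPendant w c a o' o
  | some u, some v => hw u v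
  | none, some _ | some _, none | none, none => rfl

lemma wLap_attachPendant_mulVec (w : V → V → ℝ) (c : V) (a : ℝ) (F : V → ℝ) :
    wLap (attachPendant w c a) *ᵥ (fun o => o.elim (F c) F) =
      fun o => o.elim 0 (wLap w *ᵥ F) := by
  ext (_ | u)
  · simp [wLap_mulVec_apply, Fintype.sum_option, attachPendant]
  · by_cases hu : u = c <;> simp [wLap_mulVec_apply, Fintype.sum_option, attachPendant, hu]

theorem minEig_dirichletMatrix_attachPendant_lt {w : V → V → ℝ} (hw : ∀ u v, w u v = w v u)
    {v₀ c : V} (a : ℝ) {F : V → ℝ} (hF₀ : F v₀ = 0) (hFc : F c ≠ 0) {ν : ℝ} (hν : 0 < ν)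
    (hLF : ∀ v ≠ v₀, (wLap w *ᵥ F) v = ν * F v) :
    minEig (dirichletMatrix (attachPendant w c a) ({some v₀}ᶜ : Set (Option V))) < ν := by
  set G : Option V → ℝ := fun o => o.elim (F c) F
  have hG : ∀ o ∉ ({some v₀}ᶜ : Set (Option V)), G o = 0 := by simp [G, hF₀]
  have hquad : F ⬝ᵥ (wLap w *ᵥ F) = ν * (F ⬝ᵥ F) := by
    rw [dotProduct, dotProduct, Finset.mul_sum]
    refine Finset.sum_congr rfl fun v _ => ?_
    rcases eq_or_ne v v₀ with rfl | hv
    · simp [hF₀]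
    · rw [hLF v hv]; ring
  apply minEig_lt_of_dotProduct_mulVec_lt
    (dirichletMatrix_isHermitian (attachPendant_symm hw c a) _) (x := G ∘ Subtype.val)
  rw [dirichletMatrix_mulVec_comp_val _ hG, wLap_attachPendant_mulVec,
    dotProduct_comp_val_of_eq_zero hG, dotProduct_comp_val_of_eq_zero hG]
  simp only [dotProduct, Fintype.sum_option] at hquad ⊢
  simp only [G, Option.elim, hquad]
  nlinarith [mul_pos hν (mul_self_pos.mpr hFc)]

end WeightedLaplacian

section RootedTree

variable {V : Type*} [Fintype V] [DecidableEq V] (T : SimpleGraph V)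

lemma treeWeight_symm (v₀ x : V) (w₀ : ℝ) (u v : V) :
    treeWeight T v₀ x w₀ u v = treeWeight T v₀ x w₀ v u := by
  unfold treeWeight
  rw [T.adj_comm]
  simp only [and_comm, or_comm]

lemma treeWeight_nonneg (v₀ x : V) {w₀ : ℝ} (hw₀ : 0 ≤ w₀) (u v : V) :
    0 ≤ treeWeight T v₀ x w₀ u v := by
  unfold treeWeight
  split_ifs <;> norm_num [hw₀]

lemma treeWeight_root_apply {v₀ x : V} (w₀ : ℝ) (hx : T.Adj v₀ x) :
    treeWeight T v₀ x w₀ v₀ x = w₀ := by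
  simp [treeWeight, hx]

lemma treeWeight_fromEdgeSet_pendant (v₀ x : V) (w₀ : ℝ) (c : V) :
    treeWeight (SimpleGraph.fromEdgeSet
        ((Sym2.map (some : V → Option V) '' T.edgeSet) ∪ {s((none : Option V), some c)}))
      (some v₀) (some x) w₀ = attachPendant (treeWeight T v₀ x w₀) c 1 := by
  have hmap : Sym2.map some '' T.edgeSet = (T.map Function.Embedding.some).edgeSet := by
    rw [SimpleGraph.edgeSet_map]; rfl
  rw [hmap]
  ext (_ | u) (_ | v) <;>
    simp only [treeWeight, SimpleGraph.fromEdgeSet_adj, Set.mem_union, SimpleGraph.mem_edgeSet,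
      SimpleGraph.map_adj] <;>
    simp [attachPendant, treeWeight, and_iff_left_of_imp SimpleGraph.Adj.ne]

end RootedTree

theorem dirichlet_perturbation_P2_general {V : Type*} [Fintype V] [DecidableEq V]
    (T : SimpleGraph V) (v₀ x : V) (hx : T.Adj v₀ x)
    (w₀ : ℝ) (hw₀ : 1 ≤ w₀)
    (vj : V) (hvj₀ : vj ≠ v₀)
    (hposvec : ∃ f : ({v₀}ᶜ : Set V) → ℝ, (∀ a, 0 < f a) ∧
      (dirichletMatrix (treeWeight T v₀ x w₀) ({v₀}ᶜ : Set V)) *ᵥ f =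
        nuRooted T v₀ x w₀ • f) :
    nuRooted
        (SimpleGraph.fromEdgeSet
          ((Sym2.map (some : V → Option V) '' T.edgeSet) ∪ {s((none : Option V), some vj)}))
        (some v₀) (some x) w₀
      < nuRooted T v₀ x w₀ := by
  obtain ⟨f, hf_pos, hf_eig⟩ := hposvec
  set F : V → ℝ := Function.extend Subtype.val f 0
  have hF_val (a : ({v₀}ᶜ : Set V)) : F a = f a := Subtype.val_injective.extend_apply f 0 a
  have hF₀ : F v₀ = 0 := Function.extend_apply' _ _ _ fun ⟨a, ha⟩ => a.2 ha
  have hF_nonneg (v : V) : 0 ≤ F v := by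
    by_cases hv : v = v₀
    · rw [hv, hF₀]
    · exact (hF_val ⟨v, hv⟩ ▸ hf_pos ⟨v, hv⟩).le
  have hLF : ∀ v ≠ v₀, (wLap (treeWeight T v₀ x w₀) *ᵥ F) v = nuRooted T v₀ x w₀ * F v :=
    fun _ hv => wLap_mulVec_extend_apply hf_eig hv
  have hν : 0 < nuRooted T v₀ x w₀ :=
    eigenvalue_pos_of_nonneg_eigenvector (treeWeight_symm T v₀ x w₀)
      (treeWeight_nonneg T v₀ x (by linarith)) (by rw [treeWeight_root_apply T w₀ hx]; linarith)
      hF_nonneg (hF_val ⟨x, hx.ne'⟩ ▸ hf_pos _) hF₀ hLF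
  rw [nuRooted, treeWeight_fromEdgeSet_pendant]
  exact minEig_dirichletMatrix_attachPendant_lt (treeWeight_symm T v₀ x w₀) 1 hF₀
    (hF_val ⟨vj, hvj₀⟩ ▸ (hf_pos _).ne') hν hLF

/-- perturbation P2: attaching a new pendant vertex to a vertex
`vj ≠ v₀` of a longest path starting at the root strictly decreases the first
Dirichlet eigenvalue.  The new vertex is modeled as `none : Option V`. -/
theorem dirichlet_perturbation_P2 {V : Type*} [Fintype V] [DecidableEq V]
    (T : SimpleGraph V) (hT : T.IsTree) (v₀ x : V) (hx : T.Adj v₀ x)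
    (w₀ : ℝ) (hw₀ : 1 ≤ w₀)
    (t : V) (p : T.Walk v₀ t) (hp : p.IsPath)
    (hlongest : ∀ (u : V) (q : T.Walk v₀ u), q.IsPath → q.length ≤ p.length)
    (vj : V) (hvj : vj ∈ p.support) (hvj₀ : vj ≠ v₀)
    (hposvec : ∃ f : ({v₀}ᶜ : Set V) → ℝ, (∀ a, 0 < f a) ∧
      (dirichletMatrix (treeWeight T v₀ x w₀) ({v₀}ᶜ : Set V)) *ᵥ f =
        nuRooted T v₀ x w₀ • f) :
    nuRooted
        (SimpleGraph.fromEdgeSet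
          ((Sym2.map (some : V → Option V) '' T.edgeSet) ∪ {s((none : Option V), some vj)}))
        (some v₀) (some x) w₀
      < nuRooted T v₀ x w₀ :=
  dirichlet_perturbation_P2_general T v₀ x hx w₀ hw₀ vj hvj₀ hposvec
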